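/- Let m ≥ 2 be an integer, t > 0, h₁ ≥ h₂ > 0, and 0 < ε ≤ m t h₂. Set X := 4emth₂/ε, define N_new(k) := 2(2m−1)·5^{k−1}·h₁t·X^{1/(2k)}·(4me/3)·(5/3)^{k−1} for integers k ≥ 1, and let k* := round( √( (1/2)·log_{25/3} X ) ) (which is ≥ 1 under the stated assumptions), where round(x) = ⌊x + 1/2⌋. Then N_new(k*) ≤ (8/3)·(2m−1)·m·e·t·h₁ · e^{2√( (1/2)·ln(25/3)·ln X )}. -/

import Mathlib

noncomputable section

/-- The new exponential-count bound
`N_new(k) = 2(2m-1)·5^{k-1}·h₁t·X^{1/(2k)}·(4me/3)·(5/3)^{k-1}` with `X = 4emth₂/ε`. -/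
def Nnew (m k : ℕ) (t ε h₁ h₂ : ℝ) : ℝ :=
  2 * (2 * (m : ℝ) - 1) * 5 ^ (k - 1) * (h₁ * t) *
    (4 * Real.exp 1 * (m : ℝ) * t * h₂ / ε) ^ ((1 : ℝ) / (2 * (k : ℝ))) *
    (4 * (m : ℝ) * Real.exp 1 / 3) * (5 / 3 : ℝ) ^ (k - 1)

/-!
With `b = ln(25/3)` and `L = ln X`, `N_new(k) = C · exp((k - 1) b + L / (2k))` where
`C = (8/3)(2m-1) m e t h₁`. Writing `s = √(L / (2b))`, so that `k* = round s`, one has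
`2bs - ((k - 1) b + L / (2k)) = b (k - (k - s)²) / k`, which is nonnegative because
`|k* - s| ≤ 1/2` and `k* ≥ 1`; and `2bs = 2√(bL/2)`. Finally `k* ≥ 1` since `X ≥ 4e` forces `s ≥ 1/2`.
-/

open Real

theorem one_le_round_of_half_le {α : Type*} [Field α] [LinearOrder α] [IsStrictOrderedRing α]
    [FloorRing α] {x : α} (hx : 1 / 2 ≤ x) : 1 ≤ round x := by
  rw [round_eq, Int.le_floor]
  push_cast
  linarith

theorem half_le_sqrt_half_logb {a x : ℝ} (ha : 1 < a) (hx : 0 < x) (hax : a ≤ x ^ 2) :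
    1 / 2 ≤ √(1 / 2 * logb a x) := by
  have hhalf : 1 / 2 ≤ logb a x := by
    rw [le_logb_iff_rpow_le ha hx, ← sqrt_eq_rpow, sqrt_le_iff]
    exact ⟨hx.le, hax⟩
  rw [le_sqrt (by norm_num) (by positivity)]
  linarith

/-- `ln N_new(k) - ln((8/3)(2m-1) m e t h₁)`, with `b = ln(25/3)` and `L = ln X`. -/
def orderExponent (b L k : ℝ) : ℝ := (k - 1) * b + L / (2 * k)

theorem orderExponent_le {b L k : ℝ} (hb : 0 < b) (hL : 0 ≤ L) (hk : 0 < k)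
    (hks : (k - √(1 / 2 * (L / b))) ^ 2 ≤ k) :
    orderExponent b L k ≤ 2 * √(1 / 2 * b * L) := by
  set s := √(1 / 2 * (L / b))
  have hs : s ^ 2 = 1 / 2 * (L / b) := sq_sqrt (by positivity)
  have hL_eq : L = 2 * b * s ^ 2 := by rw [hs]; field_simp
  have hsqrt : √(1 / 2 * b * L) = b * s := by
    rw [show 1 / 2 * b * L = (b * s) ^ 2 by rw [mul_pow, hs]; field_simp,
      sqrt_sq (by positivity)]
  rw [orderExponent, hsqrt, ← sub_nonneg]
  have hgap : 2 * (b * s) - ((k - 1) * b + L / (2 * k)) = b * (k - (k - s) ^ 2) / k := by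
    rw [hL_eq]; field_simp; ring
  rw [hgap]
  exact div_nonneg (mul_nonneg hb.le (sub_nonneg.2 hks)) hk.le

theorem Nnew_eq_mul_exp_orderExponent (m k : ℕ) (hk : 1 ≤ k) (t ε h₁ h₂ : ℝ)
    (hX : 0 < 4 * exp 1 * m * t * h₂ / ε) :
    Nnew m k t ε h₁ h₂ = 8 / 3 * (2 * m - 1) * m * exp 1 * t * h₁ *
      exp (orderExponent (log (25 / 3)) (log (4 * exp 1 * m * t * h₂ / ε)) k) := by
  have hpow : (5 : ℝ) ^ (k - 1) * (5 / 3) ^ (k - 1) = exp ((k - 1) * log (25 / 3)) := by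
    rw [← mul_pow, ← rpow_natCast, rpow_def_of_pos (by norm_num), Nat.cast_sub hk]
    norm_num [mul_comm]
  rw [orderExponent, exp_add, ← hpow, Nnew, rpow_def_of_pos hX]
  ring_nf

/-- At the (rounded) optimal order parameter
`k* = round(√((1/2)·log_{25/3} X))`, `X = 4emth₂/ε`, which is `≥ 1` under the stated
assumptions, the bound satisfies
`N_new(k*) ≤ (8/3)(2m-1) m e t h₁ · e^{2√((1/2) ln(25/3) ln X)}`. -/
theorem Nnew_at_optimal_k (m : ℕ) (hm : 2 ≤ m) (t ε h₁ h₂ : ℝ)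
    (ht : 0 < t) (h₂pos : 0 < h₂) (h₁₂ : h₂ ≤ h₁)
    (hε0 : 0 < ε) (hε : ε ≤ (m : ℝ) * t * h₂)
    (X : ℝ) (hX : X = 4 * Real.exp 1 * (m : ℝ) * t * h₂ / ε)
    (kstar : ℤ) (hkstar : kstar = round (Real.sqrt ((1 / 2) * Real.logb (25 / 3) X))) :
    1 ≤ kstar ∧
    Nnew m kstar.toNat t ε h₁ h₂ ≤
      (8 / 3) * (2 * (m : ℝ) - 1) * (m : ℝ) * Real.exp 1 * t * h₁ *
        Real.exp (2 * Real.sqrt ((1 / 2) * Real.log (25 / 3) * Real.log X)) := by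
  have hX4 : 4 ≤ X := by
    rw [hX, le_div_iff₀ hε0]
    nlinarith [add_one_le_exp 1]
  set s := √(1 / 2 * logb (25 / 3) X)
  have hs : 1 / 2 ≤ s := half_le_sqrt_half_logb (by norm_num) (by linarith) (by nlinarith)
  have hk : 1 ≤ kstar := hkstar ▸ one_le_round_of_half_le hs
  refine ⟨hk, ?_⟩
  obtain ⟨k, rfl⟩ := Int.eq_ofNat_of_zero_le (by omega : 0 ≤ kstar)
  have hk1 : 1 ≤ k := by omega
  have hks : ((k : ℝ) - s) ^ 2 ≤ k := by
    have hround := abs_sub_round s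
    rw [← hkstar, abs_le] at hround
    have : (1 : ℝ) ≤ k := by exact_mod_cast hk1
    push_cast at hround
    nlinarith
  have hm1 : (0 : ℝ) ≤ 2 * m - 1 := by
    have : (2 : ℝ) ≤ m := by exact_mod_cast hm
    linarith
  have hh₁ : 0 ≤ h₁ := by linarith
  rw [Int.toNat_natCast,
    Nnew_eq_mul_exp_orderExponent m k hk1 t ε h₁ h₂ (by rw [← hX]; linarith), ← hX]
  gcongr
  exact orderExponent_le (log_pos (by norm_num)) (log_nonneg (by linarith)) (by positivity) hks
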